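/- Fix i ≠ j in {1,…,n−1}. A monomial of R is Λ-homogeneous of degree H − Σ_{I∈𝓘, I∩{i,j}=∅} E_I if and only if it equals y_i·∏_{I∈𝓘, j∈I, i∉I} x_I or y_j·∏_{I∈𝓘, i∈I, j∉I} x_I. (The class H − Σ_{I∩{i,j}=∅} E_I is the class of the boundary divisor of M̄_{0,n} given by the strict transform of the hyperplane through all q_l with l ∉ {i,j}; its eigenspace in Cox(X_n) is two-dimensional, spanned by these two monomials.) -/
import Mathlib


open MvPolynomial

noncomputable section

/-- The index set 𝓘: subsets `I ⊆ {1,…,n−1}` with `1 ≤ |I| ≤ n−4`. -/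
abbrev Idx (n : ℕ) : Type := {I : Finset (Fin (n - 1)) // 1 ≤ I.card ∧ I.card ≤ n - 4}

/-- The variables of the Cox ring of `X_n`: the `y_i` and the `x_I`. -/
abbrev Vars (n : ℕ) : Type := Fin (n - 1) ⊕ Idx n

variable (k : Type) [CommRing k]

/-- `R = k[y_1,…,y_{n−1},(x_I)_{I∈𝓘}]`, the Cox ring of the toric variety `X_n`. -/
abbrev R (n : ℕ) : Type := MvPolynomial (Vars n) k

/-- The variable `y_i`. -/
def yy (n : ℕ) (i : Fin (n - 1)) : R k n := X (Sum.inl i)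

/-- The variable `x_I`. -/
def xx (n : ℕ) (I : Idx n) : R k n := X (Sum.inr I)

/-- `Λ = ℤ·H ⊕ ⨁_{I∈𝓘} ℤ·E_I`, the free abelian group on `H` and the `E_I`
(identified with `Pic(X_n) = Pic(M̄_{0,n})`). -/
abbrev Pic (n : ℕ) : Type := (Unit ⊕ Idx n) →₀ ℤ

/-- The hyperplane class `H`. -/
def Hc (n : ℕ) : Pic n := Finsupp.single (Sum.inl ()) 1

/-- The exceptional class `E_I`. -/
def Ec (n : ℕ) (I : Idx n) : Pic n := Finsupp.single (Sum.inr I) 1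

/-- The `Λ`-grading of `R`: `deg y_j = H − Σ_{I∈𝓘, j∉I} E_I` and `deg x_I = E_I`. -/
def wt (n : ℕ) : Vars n → Pic n :=
  Sum.elim
    (fun j => Hc n - ∑ I ∈ Finset.univ.filter (fun I : Idx n => j ∉ I.1), Ec n I)
    (fun I => Ec n I)

/-- The exponent vector of the monomial `y_i·∏_{I∈𝓘, j∈I, i∉I} x_I`. -/
def bExp (n : ℕ) (i j : Fin (n - 1)) : Vars n →₀ ℕ :=
  Finsupp.single (Sum.inl i) 1 +
    ∑ I ∈ Finset.univ.filter (fun I : Idx n => j ∈ I.1 ∧ i ∉ I.1),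
      Finsupp.single (Sum.inr (I : Idx n)) 1

@[simp] lemma Hc_inl (n : ℕ) : Hc n (Sum.inl ()) = 1 := Finsupp.single_eq_same
@[simp] lemma Hc_inr (n : ℕ) (I : Idx n) : Hc n (Sum.inr I) = 0 := by
  simp [Hc, Finsupp.single_apply]
@[simp] lemma Ec_inl (n : ℕ) (I : Idx n) : Ec n I (Sum.inl ()) = 0 := by
  simp [Ec, Finsupp.single_apply]
lemma Ec_inr (n : ℕ) (I J : Idx n) : Ec n I (Sum.inr J) = if I = J then 1 else 0 := by
  simp [Ec, Finsupp.single_apply]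

lemma sumEc_inr (n : ℕ) (p : Idx n → Prop) [DecidablePred p] (J : Idx n) :
    (∑ I ∈ Finset.univ.filter p, Ec n I) (Sum.inr J) = if p J then 1 else 0 := by
  rw [Finsupp.finset_sum_apply]
  simp only [Ec_inr]
  rw [Finset.sum_ite_eq' (Finset.univ.filter p) J (fun _ => (1:ℤ))]
  simp

lemma sumEc_inl (n : ℕ) (p : Idx n → Prop) [DecidablePred p] :
    (∑ I ∈ Finset.univ.filter p, Ec n I) (Sum.inl ()) = 0 := by
  rw [Finsupp.finset_sum_apply]
  simp

lemma weight_coord (n : ℕ) (d : Vars n →₀ ℕ) (c : Unit ⊕ Idx n) :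
    Finsupp.weight (wt n) d c = ∑ v : Vars n, (d v : ℤ) * wt n v c := by
  rw [Finsupp.weight_apply, Finsupp.sum_fintype]
  · rw [Finsupp.finset_sum_apply]
    simp [Finsupp.smul_apply]
  · intro v; simp

lemma bExp_inl (n : ℕ) (i j m : Fin (n - 1)) :
    bExp n i j (Sum.inl m) = if m = i then 1 else 0 := by
  simp [bExp, Finsupp.finset_sum_apply, Finsupp.single_apply, eq_comm]

lemma bExp_inr (n : ℕ) (i j : Fin (n - 1)) (J : Idx n) :
    bExp n i j (Sum.inr J) = if j ∈ J.1 ∧ i ∉ J.1 then 1 else 0 := by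
  rw [bExp]
  rw [Finsupp.add_apply, Finsupp.finset_sum_apply]
  simp only [Finsupp.single_apply, Sum.inr.injEq]
  rw [Finset.sum_ite_eq' (Finset.univ.filter _) J (fun _ => (1:ℕ))]
  simp

@[simp] lemma wt_inl_inl (n : ℕ) (m : Fin (n-1)) : wt n (Sum.inl m) (Sum.inl ()) = 1 := by
  simp [wt, Finsupp.sub_apply, sumEc_inl]
@[simp] lemma wt_inr_inl (n : ℕ) (I : Idx n) : wt n (Sum.inr I) (Sum.inl ()) = 0 := by
  simp [wt]
lemma wt_inl_inr (n : ℕ) (m : Fin (n-1)) (J : Idx n) :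
    wt n (Sum.inl m) (Sum.inr J) = if m ∈ J.1 then 0 else -1 := by
  simp only [wt, Sum.elim_inl, Finsupp.sub_apply, Hc_inr, sumEc_inr]
  split_ifs <;> simp_all
lemma wt_inr_inr (n : ℕ) (I J : Idx n) :
    wt n (Sum.inr I) (Sum.inr J) = if I = J then 1 else 0 := Ec_inr n I J

lemma weight_eq_iff (n : ℕ) (i j : Fin (n-1)) (d : Vars n →₀ ℕ) :
    (Finsupp.weight (wt n) d =
        Hc n - ∑ I ∈ Finset.univ.filter (fun I : Idx n => i ∉ I.1 ∧ j ∉ I.1), Ec n I) ↔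
    ((∑ m : Fin (n-1), (d (Sum.inl m) : ℤ)) = 1 ∧
     ∀ J : Idx n, (∑ m : Fin (n-1), (d (Sum.inl m) : ℤ) * (if m ∈ J.1 then 0 else -1))
        + (d (Sum.inr J) : ℤ) = -(if i ∉ J.1 ∧ j ∉ J.1 then (1:ℤ) else 0)) := by
  rw [Finsupp.ext_iff, Sum.forall]
  apply and_congr
  · refine ⟨fun h => ?_, fun h a => ?_⟩
    · have h0 := h ()
      rw [weight_coord, Fintype.sum_sum_type] at h0
      simpa [Finsupp.sub_apply, sumEc_inl] using h0
    · cases a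
      rw [weight_coord, Fintype.sum_sum_type]
      simpa [Finsupp.sub_apply, sumEc_inl] using h
  · apply forall_congr'
    intro J
    rw [weight_coord, Fintype.sum_sum_type]
    simp only [wt_inl_inr, wt_inr_inr, Finsupp.sub_apply, Hc_inr, sumEc_inr,
      mul_ite, mul_one, mul_zero]
    rw [Finset.sum_ite_eq' Finset.univ J (fun I => (d (Sum.inr I) : ℤ))]
    simp [mul_ite]

lemma exists_of_sum_eq_one {α : Type*} [Fintype α] [DecidableEq α] (f : α → ℕ)
    (h : ∑ a, f a = 1) : ∃ m, f m = 1 ∧ ∀ a, a ≠ m → f a = 0 := by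
  obtain ⟨m, -, hm⟩ := Finset.exists_ne_zero_of_sum_ne_zero
    (s := Finset.univ) (f := f) (by rw [h]; exact one_ne_zero)
  have hs : f m + ∑ a ∈ Finset.univ.erase m, f a = 1 := by
    rw [Finset.add_sum_erase Finset.univ f (Finset.mem_univ m)]; exact h
  have hz : ∑ a ∈ Finset.univ.erase m, f a = 0 := by omega
  refine ⟨m, by omega, fun a ha => ?_⟩
  exact (Finset.sum_eq_zero_iff).mp hz a (by simp [ha])

lemma sum_single_mul {α : Type*} [Fintype α] [DecidableEq α] (f : α → ℕ) (m₀ : α)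
    (h1 : f m₀ = 1) (h0 : ∀ a, a ≠ m₀ → f a = 0) (g : α → ℤ) :
    ∑ a, (f a : ℤ) * g a = g m₀ := by
  rw [Finset.sum_eq_single m₀]
  · simp [h1]
  · intro b _ hb; simp [h0 b hb]
  · simp


/-- for `i ≠ j`, a monomial of `R` is `Λ`-homogeneous of degree
`H − Σ_{I∈𝓘, I∩{i,j}=∅} E_I` iff it equals `y_i·∏_{I∈𝓘, j∈I, i∉I} x_I` or
`y_j·∏_{I∈𝓘, i∈I, j∉I} x_I`. -/
theorem stmt4 (n : ℕ) (hn : 5 ≤ n) (i j : Fin (n - 1)) (hij : i ≠ j)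
    (d : Vars n →₀ ℕ) :
    Finsupp.weight (wt n) d =
        Hc n - ∑ I ∈ Finset.univ.filter (fun I : Idx n => i ∉ I.1 ∧ j ∉ I.1), Ec n I ↔
      (d = bExp n i j ∨ d = bExp n j i) := by
  rw [weight_eq_iff]
  constructor
  · rintro ⟨hC1, hC2⟩
    have hC1' : ∑ m : Fin (n-1), d (Sum.inl m) = 1 := by exact_mod_cast hC1
    obtain ⟨m₀, hm1, hm0⟩ := exists_of_sum_eq_one _ hC1'
    have key : ∀ J : Idx n, (if m₀ ∈ J.1 then 0 else -1) + (d (Sum.inr J) : ℤ)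
        = -(if i ∉ J.1 ∧ j ∉ J.1 then (1:ℤ) else 0) := by
      intro J
      rw [← sum_single_mul (fun m => d (Sum.inl m)) m₀ hm1 hm0
        (fun m => if m ∈ J.1 then 0 else -1)]
      exact hC2 J
    by_cases hmi : m₀ = i
    · subst hmi
      left
      ext v
      cases v with
      | inl m =>
        rw [bExp_inl]
        by_cases hm : m = m₀
        · subst hm; simp [hm1]
        · simp [hm, hm0 m hm]
      | inr J =>
        rw [bExp_inr]
        have hk := key J
        have h2 : (d (Sum.inr J) : ℤ) = if j ∈ J.1 ∧ m₀ ∉ J.1 then 1 else 0 := by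
          by_cases h1 : m₀ ∈ J.1 <;> by_cases h3 : j ∈ J.1 <;>
            simp [h1, h3] at hk ⊢ <;> omega
        exact_mod_cast h2
    · by_cases hmj : m₀ = j
      · subst hmj
        right
        ext v
        cases v with
        | inl m =>
          rw [bExp_inl]
          by_cases hm : m = m₀
          · subst hm; simp [hm1]
          · simp [hm, hm0 m hm]
        | inr J =>
          rw [bExp_inr]
          have hk := key J
          have h2 : (d (Sum.inr J) : ℤ) = if i ∈ J.1 ∧ m₀ ∉ J.1 then 1 else 0 := by
            by_cases h1 : m₀ ∈ J.1 <;> by_cases h3 : i ∈ J.1 <;>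
              simp [h1, h3] at hk ⊢ <;> omega
          exact_mod_cast h2
      · exfalso
        have hcard : 1 ≤ ({m₀} : Finset (Fin (n-1))).card ∧
            ({m₀} : Finset (Fin (n-1))).card ≤ n - 4 := by
          rw [Finset.card_singleton]; omega
        have hk := key ⟨{m₀}, hcard⟩
        have hi : i ∉ ({m₀} : Finset (Fin (n-1))) := by
          simp [Ne.symm hmi]
        have hj : j ∉ ({m₀} : Finset (Fin (n-1))) := by
          simp [Ne.symm hmj]
        simp [hi, hj] at hk
  · have compute : ∀ a b : Fin (n-1), a ≠ b →
        (∀ J : Idx n, (a ∉ J.1 ∧ b ∉ J.1) = (i ∉ J.1 ∧ j ∉ J.1)) →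
        ((∑ m : Fin (n-1), (bExp n a b (Sum.inl m) : ℤ)) = 1 ∧
        ∀ J : Idx n, (∑ m : Fin (n-1), (bExp n a b (Sum.inl m) : ℤ) * (if m ∈ J.1 then 0 else -1))
          + (bExp n a b (Sum.inr J) : ℤ) = -(if i ∉ J.1 ∧ j ∉ J.1 then (1:ℤ) else 0)) := by
      intro a b hab hcond
      constructor
      · simp only [bExp_inl]
        push_cast
        rw [Finset.sum_ite_eq' Finset.univ a (fun _ => (1:ℤ))]
        simp
      · intro J
        simp only [← hcond J]
        rw [sum_single_mul (fun m => bExp n a b (Sum.inl m)) a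
            (by simp [bExp_inl]) (fun m hm => by simp [bExp_inl, hm])
            (fun m => if m ∈ J.1 then 0 else -1), bExp_inr]
        by_cases h1 : a ∈ J.1 <;> by_cases h2 : b ∈ J.1 <;> simp [h1, h2]
    rintro (rfl | rfl)
    · exact compute i j hij (fun J => rfl)
    · exact compute j i hij.symm (fun J => propext and_comm)

end
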